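/- For any (r,s)-directed hypergraph G with r/p + s/q < 1, the function (1/p, 1/q) ↦ log λ_{p,q}(G) is convex (concave upward) on the region {(1/p,1/q) : p,q ≥ 1, r/p + s/q < 1}; that is, for (1/p,1/q) = μ(1/p₁,1/q₁) + (1−μ)(1/p₂,1/q₂) with 0 ≤ μ ≤ 1, log λ_{p,q}(G) ≤ μ log λ_{p₁,q₁}(G) + (1−μ) log λ_{p₂,q₂}(G). -/

import Mathlib

structure DirectedHypergraph (m n N r s : ℕ) where
  tail : Fin N → Finset (Fin m)
  head : Fin N → Finset (Fin n)
  tail_card : ∀ e, (tail e).card = r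
  head_card : ∀ e, (head e).card = s

namespace DirectedHypergraph

noncomputable def pnorm {k : ℕ} (p : ℝ) (x : Fin k → ℝ) : ℝ :=
  (∑ i, |x i| ^ p) ^ (1 / p)

variable {m n N r s : ℕ}

noncomputable def polyForm (G : DirectedHypergraph m n N r s)
    (x : Fin m → ℝ) (y : Fin n → ℝ) : ℝ :=
  ∑ e, (∏ u ∈ G.tail e, x u) * ∏ v ∈ G.head e, y v

noncomputable def specRad (G : DirectedHypergraph m n N r s) (p q : ℝ) : ℝ :=
  sSup {z | ∃ x y, pnorm p x = 1 ∧ pnorm q y = 1 ∧ z = G.polyForm x y}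

def outDeg (G : DirectedHypergraph m n N r s) (u : Fin m) : ℕ :=
  (Finset.univ.filter fun e => u ∈ G.tail e).card

def inDeg (G : DirectedHypergraph m n N r s) (v : Fin n) : ℕ :=
  (Finset.univ.filter fun e => v ∈ G.head e).card

end DirectedHypergraph

/-! Hölder's inequality `∑ fᵢ^μ gᵢ^(1-μ) ≤ (∑ fᵢ)^μ (∑ gᵢ)^(1-μ)` is the whole analytic
content. Write `|x| = (|x|^(p/p₁))^μ (|x|^(p/p₂))^(1-μ)`, where the two factors are unit vectors
for the `p₁`- and `p₂`-norms (likewise for `y`), and apply the inequality to the sum over the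
edges of the multilinear form. This gives `λ_{p,q} ≤ λ_{p₁,q₁}^μ λ_{p₂,q₂}^(1-μ)`; take
logarithms. -/

open Finset

theorem Real.sum_rpow_mul_rpow_le {ι : Type*} (s : Finset ι) {f g : ι → ℝ}
    (hf : ∀ i ∈ s, 0 ≤ f i) (hg : ∀ i ∈ s, 0 ≤ g i) {μ : ℝ} (hμ0 : 0 ≤ μ) (hμ1 : μ ≤ 1) :
    ∑ i ∈ s, f i ^ μ * g i ^ (1 - μ) ≤ (∑ i ∈ s, f i) ^ μ * (∑ i ∈ s, g i) ^ (1 - μ) := by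
  rcases hμ0.eq_or_lt with rfl | hμ0
  · simp
  rcases hμ1.eq_or_lt with rfl | hμ1
  · simp
  have hf' : ∀ i ∈ s, (f i ^ μ) ^ μ⁻¹ = f i := fun i hi => by
    rw [← Real.rpow_mul (hf i hi), mul_inv_cancel₀ hμ0.ne', Real.rpow_one]
  have hg' : ∀ i ∈ s, (g i ^ (1 - μ)) ^ (1 - μ)⁻¹ = g i := fun i hi => by
    rw [← Real.rpow_mul (hg i hi), mul_inv_cancel₀ (sub_pos.2 hμ1).ne', Real.rpow_one]
  have := Real.inner_le_Lp_mul_Lq_of_nonneg s (Real.HolderConjugate.inv_one_sub_inv hμ0 hμ1)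
    (fun i hi => Real.rpow_nonneg (hf i hi) μ) (fun i hi => Real.rpow_nonneg (hg i hi) (1 - μ))
  rwa [sum_congr rfl hf', sum_congr rfl hg', one_div, inv_inv, one_div, inv_inv] at this

theorem Real.rpow_rpow_mul_rpow_rpow_eq_self {a α β μ ν : ℝ} (ha : 0 ≤ a)
    (h : α * μ + β * ν = 1) : (a ^ α) ^ μ * (a ^ β) ^ ν = a := by
  rw [← Real.rpow_mul ha, ← Real.rpow_mul ha,
    ← Real.rpow_add' ha (by rw [h]; exact one_ne_zero), h, Real.rpow_one]

theorem Real.prod_rpow_mul_rpow {ι : Type*} (s : Finset ι) {f g : ι → ℝ}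
    (hf : ∀ i ∈ s, 0 ≤ f i) (hg : ∀ i ∈ s, 0 ≤ g i) (μ ν : ℝ) :
    ∏ i ∈ s, f i ^ μ * g i ^ ν = (∏ i ∈ s, f i) ^ μ * (∏ i ∈ s, g i) ^ ν := by
  rw [prod_mul_distrib, Real.finsetProd_rpow s f hf, Real.finsetProd_rpow s g hg]

theorem div_mul_add_div_mul_eq_one {p p₁ p₂ μ : ℝ} (hp : p ≠ 0)
    (h : 1 / p = μ * (1 / p₁) + (1 - μ) * (1 / p₂)) : p / p₁ * μ + p / p₂ * (1 - μ) = 1 :=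
  calc p / p₁ * μ + p / p₂ * (1 - μ) = p * (μ * (1 / p₁) + (1 - μ) * (1 / p₂)) := by ring
    _ = 1 := by rw [← h, mul_one_div_cancel hp]

theorem pos_of_one_div_eq_convexComb {a b c μ : ℝ} (ha : 0 < a) (hb : 0 < b) (hμ0 : 0 ≤ μ)
    (hμ1 : μ ≤ 1) (h : 1 / c = μ * (1 / a) + (1 - μ) * (1 / b)) : 0 < c :=
  one_div_pos.1 <| h ▸ convex_Ioi (0 : ℝ) (one_div_pos.2 ha) (one_div_pos.2 hb) hμ0
    (sub_nonneg.2 hμ1) (add_sub_cancel _ _)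

namespace DirectedHypergraph

section pnorm

variable {k : ℕ} {p : ℝ} {x : Fin k → ℝ}

theorem pnorm_eq_one_iff (hp : 0 < p) : pnorm p x = 1 ↔ ∑ i, |x i| ^ p = 1 := by
  have hS : 0 ≤ ∑ i, |x i| ^ p := sum_nonneg fun i _ => Real.rpow_nonneg (abs_nonneg _) _
  rw [pnorm, one_div, Real.rpow_inv_eq hS zero_le_one hp.ne', Real.one_rpow]

theorem abs_le_one_of_pnorm_eq_one (hp : 0 < p) (hx : pnorm p x = 1) (i : Fin k) :
    |x i| ≤ 1 := by
  rw [← Real.rpow_le_rpow_iff (abs_nonneg _) zero_le_one hp, Real.one_rpow]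
  rw [pnorm_eq_one_iff hp] at hx
  exact hx ▸ single_le_sum (fun j _ => Real.rpow_nonneg (abs_nonneg (x j)) p) (mem_univ i)

theorem pnorm_abs_rpow_div_eq_one {p' : ℝ} (hp : 0 < p) (hp' : 0 < p') (hx : pnorm p x = 1) :
    pnorm p' (fun i => |x i| ^ (p / p')) = 1 := by
  rw [pnorm_eq_one_iff hp']
  rw [pnorm_eq_one_iff hp] at hx
  convert hx using 2 with i
  rw [abs_of_nonneg (Real.rpow_nonneg (abs_nonneg _) _), ← Real.rpow_mul (abs_nonneg _),
    div_mul_cancel₀ _ hp'.ne']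

theorem exists_pos_pnorm_const_eq_one (hk : 0 < k) (hp : 0 < p) :
    ∃ c > 0, pnorm p (fun _ : Fin k => c) = 1 := by
  have hk' : (0 : ℝ) < k := Nat.cast_pos.2 hk
  refine ⟨(k : ℝ) ^ (-p⁻¹), Real.rpow_pos_of_pos hk' _, (pnorm_eq_one_iff hp).2 ?_⟩
  rw [abs_of_pos (Real.rpow_pos_of_pos hk' _), ← Real.rpow_mul hk'.le, neg_mul,
    inv_mul_cancel₀ hp.ne', Real.rpow_neg_one, sum_const, card_univ, Fintype.card_fin,
    nsmul_eq_mul, mul_inv_cancel₀ hk'.ne']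

end pnorm

variable {m n N r s : ℕ} (G : DirectedHypergraph m n N r s)

theorem polyForm_nonneg {x : Fin m → ℝ} {y : Fin n → ℝ} (hx : ∀ u, 0 ≤ x u)
    (hy : ∀ v, 0 ≤ y v) : 0 ≤ G.polyForm x y :=
  sum_nonneg fun _ _ => mul_nonneg (prod_nonneg fun u _ => hx u) (prod_nonneg fun v _ => hy v)

theorem polyForm_pos (hN : 0 < N) {x : Fin m → ℝ} {y : Fin n → ℝ} (hx : ∀ u, 0 < x u)
    (hy : ∀ v, 0 < y v) : 0 < G.polyForm x y :=
  haveI := Fin.pos_iff_nonempty.1 hN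
  sum_pos (fun _ _ => mul_pos (prod_pos fun u _ => hx u) (prod_pos fun v _ => hy v))
    univ_nonempty

theorem polyForm_le_polyForm_abs (x : Fin m → ℝ) (y : Fin n → ℝ) :
    G.polyForm x y ≤ G.polyForm (fun u => |x u|) (fun v => |y v|) :=
  sum_le_sum fun e _ => by
    simpa only [abs_mul, abs_prod] using
      le_abs_self ((∏ u ∈ G.tail e, x u) * ∏ v ∈ G.head e, y v)

theorem polyForm_le_card {p q : ℝ} (hp : 0 < p) (hq : 0 < q) {x : Fin m → ℝ}
    {y : Fin n → ℝ} (hx : pnorm p x = 1) (hy : pnorm q y = 1) : G.polyForm x y ≤ N := by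
  have hx1 := abs_le_one_of_pnorm_eq_one hp hx
  have hy1 := abs_le_one_of_pnorm_eq_one hq hy
  calc G.polyForm x y ≤ G.polyForm (fun u => |x u|) (fun v => |y v|) :=
        G.polyForm_le_polyForm_abs x y
    _ ≤ ∑ _e : Fin N, (1 : ℝ) := sum_le_sum fun e _ =>
        mul_le_one₀ (prod_le_one (fun _ _ => abs_nonneg _) fun u _ => hx1 u)
          (prod_nonneg fun _ _ => abs_nonneg _)
          (prod_le_one (fun _ _ => abs_nonneg _) fun v _ => hy1 v)
    _ = N := by simp

theorem polyForm_le_specRad {p q : ℝ} (hp : 0 < p) (hq : 0 < q) {x : Fin m → ℝ}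
    {y : Fin n → ℝ} (hx : pnorm p x = 1) (hy : pnorm q y = 1) : G.polyForm x y ≤ G.specRad p q :=
  le_csSup ⟨N, by rintro _ ⟨x, y, hx, hy, rfl⟩; exact G.polyForm_le_card hp hq hx hy⟩
    ⟨x, y, hx, hy, rfl⟩

theorem specRad_le {p q c : ℝ} (hc : 0 ≤ c)
    (h : ∀ x y, pnorm p x = 1 → pnorm q y = 1 → G.polyForm x y ≤ c) : G.specRad p q ≤ c :=
  Real.sSup_le (by rintro _ ⟨x, y, hx, hy, rfl⟩; exact h x y hx hy) hc

theorem polyForm_geomMean_le {a b : Fin m → ℝ} {c d : Fin n → ℝ} (ha : ∀ u, 0 ≤ a u)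
    (hb : ∀ u, 0 ≤ b u) (hc : ∀ v, 0 ≤ c v) (hd : ∀ v, 0 ≤ d v) {μ : ℝ} (hμ0 : 0 ≤ μ)
    (hμ1 : μ ≤ 1) :
    G.polyForm (fun u => a u ^ μ * b u ^ (1 - μ)) (fun v => c v ^ μ * d v ^ (1 - μ)) ≤
      G.polyForm a c ^ μ * G.polyForm b d ^ (1 - μ) := by
  have hterm : ∀ e,
      (∏ u ∈ G.tail e, a u ^ μ * b u ^ (1 - μ)) * ∏ v ∈ G.head e, c v ^ μ * d v ^ (1 - μ) =
        ((∏ u ∈ G.tail e, a u) * ∏ v ∈ G.head e, c v) ^ μ *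
          ((∏ u ∈ G.tail e, b u) * ∏ v ∈ G.head e, d v) ^ (1 - μ) := fun e => by
    rw [Real.prod_rpow_mul_rpow _ (fun u _ => ha u) (fun u _ => hb u),
      Real.prod_rpow_mul_rpow _ (fun v _ => hc v) (fun v _ => hd v),
      Real.mul_rpow (prod_nonneg fun u _ => ha u) (prod_nonneg fun v _ => hc v),
      Real.mul_rpow (prod_nonneg fun u _ => hb u) (prod_nonneg fun v _ => hd v)]
    ring
  rw [polyForm, sum_congr rfl fun e _ => hterm e]
  exact Real.sum_rpow_mul_rpow_le _
    (fun e _ => mul_nonneg (prod_nonneg fun u _ => ha u) (prod_nonneg fun v _ => hc v))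
    (fun e _ => mul_nonneg (prod_nonneg fun u _ => hb u) (prod_nonneg fun v _ => hd v)) hμ0 hμ1

theorem specRad_le_rpow_mul_rpow {p₁ q₁ p₂ q₂ p q μ : ℝ} (hp₁ : 0 < p₁) (hq₁ : 0 < q₁)
    (hp₂ : 0 < p₂) (hq₂ : 0 < q₂) (hp0 : 0 < p) (hq0 : 0 < q) (hμ0 : 0 ≤ μ) (hμ1 : μ ≤ 1)
    (hp : 1 / p = μ * (1 / p₁) + (1 - μ) * (1 / p₂))
    (hq : 1 / q = μ * (1 / q₁) + (1 - μ) * (1 / q₂))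
    (hrad₁ : 0 ≤ G.specRad p₁ q₁) (hrad₂ : 0 ≤ G.specRad p₂ q₂) :
    G.specRad p q ≤ G.specRad p₁ q₁ ^ μ * G.specRad p₂ q₂ ^ (1 - μ) := by
  refine G.specRad_le (by positivity) fun x y hx hy => ?_
  set x₁ : Fin m → ℝ := fun u => |x u| ^ (p / p₁)
  set x₂ : Fin m → ℝ := fun u => |x u| ^ (p / p₂)
  set y₁ : Fin n → ℝ := fun v => |y v| ^ (q / q₁)
  set y₂ : Fin n → ℝ := fun v => |y v| ^ (q / q₂)
  have hx_split : (fun u => |x u|) = fun u => x₁ u ^ μ * x₂ u ^ (1 - μ) := funext fun u =>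
    (Real.rpow_rpow_mul_rpow_rpow_eq_self (abs_nonneg _)
      (div_mul_add_div_mul_eq_one hp0.ne' hp)).symm
  have hy_split : (fun v => |y v|) = fun v => y₁ v ^ μ * y₂ v ^ (1 - μ) := funext fun v =>
    (Real.rpow_rpow_mul_rpow_rpow_eq_self (abs_nonneg _)
      (div_mul_add_div_mul_eq_one hq0.ne' hq)).symm
  have hnonneg {k : ℕ} (z : Fin k → ℝ) (t : ℝ) : ∀ i, 0 ≤ |z i| ^ t :=
    fun i => Real.rpow_nonneg (abs_nonneg _) t
  calc G.polyForm x y ≤ G.polyForm (fun u => |x u|) (fun v => |y v|) :=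
        G.polyForm_le_polyForm_abs x y
    _ ≤ G.polyForm x₁ y₁ ^ μ * G.polyForm x₂ y₂ ^ (1 - μ) := by
        rw [hx_split, hy_split]
        exact G.polyForm_geomMean_le (hnonneg x _) (hnonneg x _) (hnonneg y _) (hnonneg y _)
          hμ0 hμ1
    _ ≤ G.specRad p₁ q₁ ^ μ * G.specRad p₂ q₂ ^ (1 - μ) := by
        have := G.polyForm_nonneg (hnonneg x (p / p₁)) (hnonneg y (q / q₁))
        have := G.polyForm_nonneg (hnonneg x (p / p₂)) (hnonneg y (q / q₂))
        gcongr
        · exact G.polyForm_le_specRad hp₁ hq₁ (pnorm_abs_rpow_div_eq_one hp0 hp₁ hx)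
            (pnorm_abs_rpow_div_eq_one hq0 hq₁ hy)
        · exact G.polyForm_le_specRad hp₂ hq₂ (pnorm_abs_rpow_div_eq_one hp0 hp₂ hx)
            (pnorm_abs_rpow_div_eq_one hq0 hq₂ hy)

theorem specRad_pos (hm : 0 < m) (hn : 0 < n) (hN : 0 < N) {p q : ℝ} (hp : 0 < p)
    (hq : 0 < q) : 0 < G.specRad p q := by
  obtain ⟨c, hc, hxc⟩ := exists_pos_pnorm_const_eq_one hm hp
  obtain ⟨d, hd, hyd⟩ := exists_pos_pnorm_const_eq_one hn hq
  exact (G.polyForm_pos hN (fun _ => hc) fun _ => hd).trans_le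
    (G.polyForm_le_specRad hp hq hxc hyd)

theorem specRad_eq_zero {p q : ℝ} (hp : 0 < p) (hq : 0 < q) (h : m = 0 ∨ n = 0 ∨ N = 0) :
    G.specRad p q = 0 := by
  have hzero : ∀ x y, pnorm p x = 1 → pnorm q y = 1 → G.polyForm x y = 0 := by
    intro x y hx hy
    rw [pnorm_eq_one_iff hp] at hx
    rw [pnorm_eq_one_iff hq] at hy
    rcases h with rfl | rfl | rfl <;> simp_all [polyForm]
  refine le_antisymm (G.specRad_le le_rfl fun x y hx hy => (hzero x y hx hy).le) ?_
  exact Real.sSup_nonneg fun _ ⟨x, y, hx, hy, hz⟩ => hz ▸ (hzero x y hx hy).ge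

end DirectedHypergraph

theorem specRad_log_convex_general (m n N r s : ℕ)
    (G : DirectedHypergraph m n N r s) (p₁ q₁ p₂ q₂ p q μ : ℝ)
    (hp₁ : 1 ≤ p₁) (hq₁ : 1 ≤ q₁) (hp₂ : 1 ≤ p₂) (hq₂ : 1 ≤ q₂)
    (hμ0 : 0 ≤ μ) (hμ1 : μ ≤ 1)
    (hp : 1 / p = μ * (1 / p₁) + (1 - μ) * (1 / p₂))
    (hq : 1 / q = μ * (1 / q₁) + (1 - μ) * (1 / q₂)) :
    Real.log (G.specRad p q) ≤
      μ * Real.log (G.specRad p₁ q₁) +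
        (1 - μ) * Real.log (G.specRad p₂ q₂) := by
  have hp₁0 : 0 < p₁ := by linarith
  have hq₁0 : 0 < q₁ := by linarith
  have hp₂0 : 0 < p₂ := by linarith
  have hq₂0 : 0 < q₂ := by linarith
  have hp0 := pos_of_one_div_eq_convexComb hp₁0 hp₂0 hμ0 hμ1 hp
  have hq0 := pos_of_one_div_eq_convexComb hq₁0 hq₂0 hμ0 hμ1 hq
  by_cases hG : 0 < m ∧ 0 < n ∧ 0 < N
  · obtain ⟨hm, hn, hN⟩ := hG
    have hrad₁ := G.specRad_pos hm hn hN hp₁0 hq₁0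
    have hrad₂ := G.specRad_pos hm hn hN hp₂0 hq₂0
    calc Real.log (G.specRad p q)
        ≤ Real.log (G.specRad p₁ q₁ ^ μ * G.specRad p₂ q₂ ^ (1 - μ)) :=
          Real.log_le_log (G.specRad_pos hm hn hN hp0 hq0) <|
            G.specRad_le_rpow_mul_rpow hp₁0 hq₁0 hp₂0 hq₂0 hp0 hq0 hμ0 hμ1 hp hq
              hrad₁.le hrad₂.le
      _ = μ * Real.log (G.specRad p₁ q₁) + (1 - μ) * Real.log (G.specRad p₂ q₂) := by
          rw [Real.log_mul (by positivity) (by positivity), Real.log_rpow hrad₁,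
            Real.log_rpow hrad₂]
  · -- all three radii vanish, and `Real.log 0 = 0`
    have hG' : m = 0 ∨ n = 0 ∨ N = 0 := by omega
    simp [G.specRad_eq_zero hp0 hq0 hG', G.specRad_eq_zero hp₁0 hq₁0 hG',
      G.specRad_eq_zero hp₂0 hq₂0 hG']

/-- In the elliptic phase, `log λ_{p,q}(G)` is a convex function of `(1/p, 1/q)`:
if `(1/p, 1/q) = μ (1/p₁, 1/q₁) + (1−μ)(1/p₂, 1/q₂)` with `0 ≤ μ ≤ 1`, then
`log λ_{p,q}(G) ≤ μ log λ_{p₁,q₁}(G) + (1−μ) log λ_{p₂,q₂}(G)`. -/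
theorem specRad_log_convex (m n N r s : ℕ)
    (G : DirectedHypergraph m n N r s) (p₁ q₁ p₂ q₂ p q μ : ℝ)
    (hp₁ : 1 ≤ p₁) (hq₁ : 1 ≤ q₁) (hp₂ : 1 ≤ p₂) (hq₂ : 1 ≤ q₂)
    (he₁ : (r : ℝ) / p₁ + (s : ℝ) / q₁ < 1)
    (he₂ : (r : ℝ) / p₂ + (s : ℝ) / q₂ < 1)
    (hμ0 : 0 ≤ μ) (hμ1 : μ ≤ 1)
    (hp : 1 / p = μ * (1 / p₁) + (1 - μ) * (1 / p₂))
    (hq : 1 / q = μ * (1 / q₁) + (1 - μ) * (1 / q₂)) :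
    Real.log (G.specRad p q) ≤
      μ * Real.log (G.specRad p₁ q₁) +
        (1 - μ) * Real.log (G.specRad p₂ q₂) :=
  specRad_log_convex_general m n N r s G p₁ q₁ p₂ q₂ p q μ hp₁ hq₁ hp₂ hq₂ hμ0 hμ1 hp hq
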